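/- Let C be a cartesian category and G an internal group such that G* : C → [G, C] has a left adjoint Σ_G and the adjunction Σ_G ⊣ G* satisfies Frobenius reciprocity. Let L ⊣ R : C ⇄ [G, C] be an adjunction over C (i.e. Σ_G ∘ L = Id_C), and write (P, p) for the G-object L(1). Then for every object X of C the diagram G × P × X ⇉ P × X →^{π₂} X, with parallel pair p × id_X and π₂₃, is a coequalizer in C; consequently the functor P* : C → C/P sending X to the projection π₂ : P × X → P reflects isomorphisms. -/

import Mathlib

open CategoryTheory CategoryTheory.Limits

universe v u v₂ u₂ v₃ u₃

noncomputable section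

namespace PrincipalBundles

variable {C : Type u} [Category.{v} C] [HasFiniteLimits C]

attribute [local simp] prod.lift_fst prod.lift_snd prod.lift_fst_assoc prod.lift_snd_assoc

/-- An internal group in a cartesian category `C`: an object `G` with multiplication
`m : G ⨯ G ⟶ G`, unit `e : 1 ⟶ G` and inverse `i : G ⟶ G` satisfying the group axioms. -/
structure InternalGroup (C : Type u) [Category.{v} C] [HasFiniteLimits C] where
  G : C
  m : G ⨯ G ⟶ G
  e : ⊤_ C ⟶ G
  i : G ⟶ G
  mul_assoc' : (prod.associator G G G).inv ≫ prod.map m (𝟙 G) ≫ m = prod.map (𝟙 G) m ≫ m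
  one_mul' : prod.lift (terminal.from G ≫ e) (𝟙 G) ≫ m = 𝟙 G
  mul_one' : prod.lift (𝟙 G) (terminal.from G ≫ e) ≫ m = 𝟙 G
  inv_mul' : prod.lift i (𝟙 G) ≫ m = terminal.from G ≫ e
  mul_inv' : prod.lift (𝟙 G) i ≫ m = terminal.from G ≫ e

namespace InternalGroup

variable (Gr : InternalGroup C)

/-- Multiplication of generalized elements. -/
theorem one_mul_elt {T : C} (b : T ⟶ Gr.G) :
    prod.lift (terminal.from T ≫ Gr.e) b ≫ Gr.m = b := by
  have h : prod.lift (terminal.from T ≫ Gr.e) b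
      = b ≫ prod.lift (terminal.from Gr.G ≫ Gr.e) (𝟙 Gr.G) := by
    rw [prod.comp_lift, ← Category.assoc, terminal.comp_from, Category.comp_id]
  rw [h, Category.assoc, Gr.one_mul', Category.comp_id]

theorem mul_one_elt {T : C} (a : T ⟶ Gr.G) :
    prod.lift a (terminal.from T ≫ Gr.e) ≫ Gr.m = a := by
  have h : prod.lift a (terminal.from T ≫ Gr.e)
      = a ≫ prod.lift (𝟙 Gr.G) (terminal.from Gr.G ≫ Gr.e) := by
    rw [prod.comp_lift, ← Category.assoc, terminal.comp_from, Category.comp_id]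
  rw [h, Category.assoc, Gr.mul_one', Category.comp_id]

theorem mul_assoc_elt {T : C} (a b c : T ⟶ Gr.G) :
    prod.lift (prod.lift a b ≫ Gr.m) c ≫ Gr.m = prod.lift a (prod.lift b c ≫ Gr.m) ≫ Gr.m := by
  have h1 : prod.lift (prod.lift a b ≫ Gr.m) c
      = prod.lift (prod.lift a b) c ≫ prod.map Gr.m (𝟙 _) := by simp
  have h2 : prod.lift (prod.lift a b) c
      = prod.lift a (prod.lift b c) ≫ (prod.associator Gr.G Gr.G Gr.G).inv := by
    ext <;> simp
  have h3 : prod.lift a (prod.lift b c ≫ Gr.m)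
      = prod.lift a (prod.lift b c) ≫ prod.map (𝟙 _) Gr.m := by simp
  rw [h1, h2, h3, Category.assoc, Category.assoc, Gr.mul_assoc', ← Category.assoc]

theorem inv_mul_elt {T : C} (a : T ⟶ Gr.G) :
    prod.lift (a ≫ Gr.i) a ≫ Gr.m = terminal.from T ≫ Gr.e := by
  have h : prod.lift (a ≫ Gr.i) a = a ≫ prod.lift Gr.i (𝟙 Gr.G) := by
    rw [prod.comp_lift, Category.comp_id]
  rw [h, Category.assoc, Gr.inv_mul', ← Category.assoc, terminal.comp_from]

theorem mul_inv_elt {T : C} (a : T ⟶ Gr.G) :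
    prod.lift a (a ≫ Gr.i) ≫ Gr.m = terminal.from T ≫ Gr.e := by
  have h : prod.lift a (a ≫ Gr.i) = a ≫ prod.lift (𝟙 Gr.G) Gr.i := by
    rw [prod.comp_lift, Category.comp_id]
  rw [h, Category.assoc, Gr.mul_inv', ← Category.assoc, terminal.comp_from]

/-- The monad `X ↦ G ⨯ X` on `C` associated to an internal group `G`; its unit at `X` is
`(e ∘ !, id) : X ⟶ G ⨯ X` and its multiplication at `X` is `m ⨯ id : G ⨯ (G ⨯ X) ⟶ G ⨯ X`. -/
def actionMonad : Monad C where
  toFunctor := prod.functor.obj Gr.G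
  η :=
    { app := fun X => prod.lift (terminal.from X ≫ Gr.e) (𝟙 X)
      naturality := by
        intro X Y f
        dsimp [prod.functor]
        ext
        · simp [← Category.assoc, terminal.comp_from]
        · simp }
  μ :=
    { app := fun X => (prod.associator Gr.G Gr.G X).inv ≫ prod.map Gr.m (𝟙 X)
      naturality := by
        intro X Y f
        dsimp [prod.functor]
        ext
        · simp [prod.comp_lift_assoc]
        · simp }
  assoc := by
    intro X
    dsimp [prod.functor]
    ext
    · simp only [prod.comp_lift_assoc, Category.assoc, prod.map_fst, prod.map_snd,
        prod.lift_fst, prod.lift_snd, Category.comp_id, Category.id_comp,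
        prod.associator_inv, prod.lift_fst_assoc, prod.comp_lift, prod.map_fst_assoc,
        prod.map_snd_assoc, prod.lift_snd_assoc]
      exact (Gr.mul_assoc_elt _ _ _).symm
    · simp
  left_unit := by
    intro X
    dsimp [prod.functor]
    ext
    · simp [prod.comp_lift_assoc, Gr.one_mul_elt]
    · simp
  right_unit := by
    intro X
    dsimp [prod.functor]
    ext
    · simp only [prod.comp_lift_assoc, Category.assoc, prod.map_fst, prod.map_snd,
        prod.lift_fst, prod.lift_snd, Category.comp_id, Category.id_comp,
        prod.associator_inv, prod.lift_fst_assoc]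
      simp only [prod.map_snd_assoc, prod.lift_fst_assoc, Category.assoc, prod.lift_fst]
      rw [← Category.assoc prod.snd, terminal.comp_from]
      exact Gr.mul_one_elt prod.fst
    · simp

/-- The category `[G, C]` of `G`-objects and `G`-homomorphisms: objects of `C` equipped with
a `G`-action `a : G ⨯ A ⟶ A` satisfying the unit and associativity laws, with morphisms the
morphisms of `C` commuting with the actions.  (Implemented as the Eilenberg–Moore category of
the monad `G ⨯ (-)`; the algebra axioms are literally the action axioms, and algebra morphisms
are literally the `G`-homomorphisms.) -/
abbrev GObject := (actionMonad Gr).Algebra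

instance : HasFiniteLimits (GObject Gr) :=
  ⟨fun _ _ _ => ⟨fun D => Monad.hasLimit_of_comp_forget_hasLimit D⟩⟩

variable {Gr}

/-- The action of a `G`-object, seen as a morphism `G ⨯ A ⟶ A` in `C`. -/
def act (A : GObject Gr) : Gr.G ⨯ A.A ⟶ A.A := A.a

/-- Elementwise unit law for an action. -/
theorem act_one_elt (A : GObject Gr) {T : C} (y : T ⟶ A.A) :
    prod.lift (terminal.from T ≫ Gr.e) y ≫ act A = y := by
  have h : prod.lift (terminal.from T ≫ Gr.e) y
      = y ≫ prod.lift (terminal.from A.A ≫ Gr.e) (𝟙 A.A) := by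
    rw [prod.comp_lift, ← Category.assoc, terminal.comp_from, Category.comp_id]
  have hu := A.unit
  dsimp [actionMonad] at hu
  rw [h, Category.assoc, act]
  erw [hu]
  rw [Category.comp_id]

/-- Elementwise associativity law for an action. -/
theorem act_assoc_elt (A : GObject Gr) {T : C} (a b : T ⟶ Gr.G) (y : T ⟶ A.A) :
    prod.lift (prod.lift a b ≫ Gr.m) y ≫ act A
      = prod.lift a (prod.lift b y ≫ act A) ≫ act A := by
  have ha : (prod.associator Gr.G Gr.G A.A).inv ≫ prod.map Gr.m (𝟙 A.A) ≫ A.a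
      = prod.map (𝟙 Gr.G) A.a ≫ A.a := by
    have ha0 := A.assoc
    dsimp [actionMonad, prod.functor] at ha0
    simp only [Category.assoc] at ha0
    exact ha0
  have h1 : prod.lift (prod.lift a b ≫ Gr.m) y
      = prod.lift (prod.lift a b) y ≫ prod.map Gr.m (𝟙 _) := by simp
  have h2 : prod.lift (prod.lift a b) y
      = prod.lift a (prod.lift b y) ≫ (prod.associator Gr.G Gr.G A.A).inv := by
    ext <;> simp
  have h3 : prod.lift a (prod.lift b y ≫ act A)
      = prod.lift a (prod.lift b y) ≫ prod.map (𝟙 _) (act A) := by simp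
  rw [h1, h2, h3, Category.assoc, Category.assoc, act, ha]
  exact (Category.assoc _ _ _).symm

variable (Gr)

/-- The functor `G* : C ⥤ [G, C]` equipping an object with the trivial action `π₂`. -/
def trivAction : C ⥤ GObject Gr where
  obj X :=
    { A := X
      a := prod.snd
      unit := by simp [actionMonad]; exact prod.lift_snd _ _
      assoc := by simp [actionMonad, prod.functor] }
  map f :=
    { f := f
      h := by simp [actionMonad, prod.functor] }
  map_id X := by ext; rfl
  map_comp f g := by ext; rfl

/-- The `G`-object `(G, m)`: `G` acting on itself by multiplication. -/
def selfAction : GObject Gr where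
  A := Gr.G
  a := Gr.m
  unit := Gr.one_mul'
  assoc := by
    have h := Gr.mul_assoc'
    dsimp [actionMonad, prod.functor]
    simpa [Category.assoc] using h

/-- The product of two `G`-objects: the product in `C` with the componentwise action. -/
def prodGObject (A B : GObject Gr) : GObject Gr where
  A := A.A ⨯ B.A
  a := prod.lift (prod.map (𝟙 Gr.G) prod.fst ≫ act A) (prod.map (𝟙 Gr.G) prod.snd ≫ act B)
  unit := by
    dsimp [actionMonad, prod.functor]
    apply Limits.prod.hom_ext
    · simp only [Category.assoc, prod.lift_fst, prod.lift_map_assoc, Category.comp_id,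
        Category.id_comp]
      exact act_one_elt A prod.fst
    · simp only [Category.assoc, prod.lift_snd, prod.lift_map_assoc, Category.comp_id,
        Category.id_comp]
      exact act_one_elt B prod.snd
  assoc := by
    dsimp [actionMonad, prod.functor]
    apply Limits.prod.hom_ext
    · simp only [prod.comp_lift_assoc, Category.assoc, prod.map_fst, prod.map_snd,
        prod.lift_fst, prod.lift_snd, Category.comp_id, Category.id_comp,
        prod.associator_inv, prod.lift_fst_assoc, prod.comp_lift, prod.map_fst_assoc,
        prod.map_snd_assoc, prod.lift_snd_assoc, prod.map_map_assoc, prod.map_map]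
      rw [prod.lift_map_assoc]
      have hR : prod.map (𝟙 Gr.G) (prod.map (𝟙 Gr.G) (prod.fst : A.A ⨯ B.A ⟶ A.A) ≫ act A) ≫
              act A
          = prod.lift (prod.fst : Gr.G ⨯ (Gr.G ⨯ (A.A ⨯ B.A)) ⟶ Gr.G)
              (prod.lift ((prod.snd : Gr.G ⨯ (Gr.G ⨯ (A.A ⨯ B.A)) ⟶ Gr.G ⨯ (A.A ⨯ B.A)) ≫
                  prod.fst)
                ((prod.snd ≫ prod.snd) ≫ prod.fst) ≫ act A) ≫
            act A := by
        congr 1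
        apply Limits.prod.hom_ext
        · simp
        · simp only [prod.map_snd, prod.lift_snd]
          rw [← Category.assoc]
          congr 1
          apply Limits.prod.hom_ext <;> simp
      rw [hR]
      exact act_assoc_elt A prod.fst (prod.snd ≫ prod.fst) ((prod.snd ≫ prod.snd) ≫ prod.fst)
    · simp only [prod.comp_lift_assoc, Category.assoc, prod.map_fst, prod.map_snd,
        prod.lift_fst, prod.lift_snd, Category.comp_id, Category.id_comp,
        prod.associator_inv, prod.lift_fst_assoc, prod.comp_lift, prod.map_fst_assoc,
        prod.map_snd_assoc, prod.lift_snd_assoc, prod.map_map_assoc, prod.map_map]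
      rw [prod.lift_map_assoc]
      have hR : prod.map (𝟙 Gr.G) (prod.map (𝟙 Gr.G) (prod.snd : A.A ⨯ B.A ⟶ B.A) ≫ act B) ≫
              act B
          = prod.lift (prod.fst : Gr.G ⨯ (Gr.G ⨯ (A.A ⨯ B.A)) ⟶ Gr.G)
              (prod.lift ((prod.snd : Gr.G ⨯ (Gr.G ⨯ (A.A ⨯ B.A)) ⟶ Gr.G ⨯ (A.A ⨯ B.A)) ≫
                  prod.fst)
                ((prod.snd ≫ prod.snd) ≫ prod.snd) ≫ act B) ≫
            act B := by
        congr 1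
        apply Limits.prod.hom_ext
        · simp
        · simp only [prod.map_snd, prod.lift_snd]
          rw [← Category.assoc]
          congr 1
          apply Limits.prod.hom_ext <;> simp
      rw [hR]
      exact act_assoc_elt B prod.fst (prod.snd ≫ prod.fst) ((prod.snd ≫ prod.snd) ≫ prod.snd)

variable {Gr}

/-- First projection of the product of `G`-objects. -/
def prodGFst (A B : GObject Gr) : prodGObject Gr A B ⟶ A where
  f := prod.fst
  h := by simp [prodGObject, actionMonad, prod.functor, act]

/-- Second projection of the product of `G`-objects. -/
def prodGSnd (A B : GObject Gr) : prodGObject Gr A B ⟶ B where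
  f := prod.snd
  h := by simp [prodGObject, actionMonad, prod.functor, act]

/-- Functoriality of the product of `G`-objects. -/
def prodGHom {A A' B B' : GObject Gr} (u : A ⟶ A') (v : B ⟶ B') :
    prodGObject Gr A B ⟶ prodGObject Gr A' B' where
  f := prod.map u.f v.f
  h := by
    have hu : prod.map (𝟙 Gr.G) u.f ≫ act A' = act A ≫ u.f := by
      have h0 := u.h; dsimp [actionMonad, prod.functor] at h0; exact h0
    have hv : prod.map (𝟙 Gr.G) v.f ≫ act B' = act B ≫ v.f := by
      have h0 := v.h; dsimp [actionMonad, prod.functor] at h0; exact h0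
    dsimp [prodGObject, actionMonad, prod.functor]
    apply Limits.prod.hom_ext
    · simp only [Category.assoc, prod.lift_fst, prod.map_fst, prod.lift_fst_assoc]
      rw [← Category.assoc, prod.map_map, Category.id_comp, prod.map_fst]
      rw [show prod.map (𝟙 Gr.G) (prod.fst ≫ u.f)
            = prod.map (𝟙 Gr.G) prod.fst ≫ prod.map (𝟙 Gr.G) u.f by
          rw [prod.map_map, Category.comp_id]]
      rw [Category.assoc, hu]
    · simp only [Category.assoc, prod.lift_snd, prod.map_snd, prod.lift_snd_assoc]
      rw [← Category.assoc, prod.map_map, Category.id_comp, prod.map_snd]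
      rw [show prod.map (𝟙 Gr.G) (prod.snd ≫ v.f)
            = prod.map (𝟙 Gr.G) prod.snd ≫ prod.map (𝟙 Gr.G) v.f by
          rw [prod.map_map, Category.comp_id]]
      rw [Category.assoc, hv]

variable (Gr)

/-- The functor `(P, p) ⨯ (-) : [G, C] ⥤ [G, C]`. -/
def prodGFunctor (P : GObject Gr) : GObject Gr ⥤ GObject Gr where
  obj A := prodGObject Gr P A
  map h := prodGHom (𝟙 P) h
  map_id A := by
    apply Monad.Algebra.Hom.ext
    show prod.map (𝟙 P : P ⟶ P).f (𝟙 A : A ⟶ A).f = (𝟙 (prodGObject Gr P A) : _ ⟶ _).f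
    rw [Monad.Algebra.id_f, Monad.Algebra.id_f, Monad.Algebra.id_f, prod.map_id_id]
    rfl
  map_comp f g := by
    apply Monad.Algebra.Hom.ext
    show prod.map (𝟙 P : P ⟶ P).f (f ≫ g).f = (prodGHom (𝟙 P) f ≫ prodGHom (𝟙 P) g).f
    rw [Monad.Algebra.comp_f, Monad.Algebra.comp_f]
    show prod.map (𝟙 P : P ⟶ P).f (f.f ≫ g.f)
        = prod.map (𝟙 P : P ⟶ P).f f.f ≫ prod.map (𝟙 P : P ⟶ P).f g.f
    rw [prod.map_map]
    rw [Monad.Algebra.id_f, Category.comp_id]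

end InternalGroup

open InternalGroup

section Frobenius

variable {D : Type u₂} [Category.{v₂} D] [HasFiniteLimits D]
variable {E : Type u₃} [Category.{v₃} E] [HasFiniteLimits E]

/-- The canonical Frobenius map `L(R X ⨯ W) ⟶ X ⨯ L W` of an adjunction `L ⊣ R`, namely
`(L π₁, L π₂)` followed by `ε_X ⨯ id` where `ε` is the counit. -/
def frobMap {L : D ⥤ E} {R : E ⥤ D} (adj : L ⊣ R) (W : D) (X : E) :
    L.obj (R.obj X ⨯ W) ⟶ X ⨯ L.obj W :=
  prod.lift (L.map prod.fst ≫ adj.counit.app X) (L.map prod.snd)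

/-- An adjunction `L ⊣ R` between cartesian categories satisfies Frobenius reciprocity if
all the canonical maps `L(R X ⨯ W) ⟶ X ⨯ L W` are isomorphisms. -/
def IsFrobenius {L : D ⥤ E} {R : E ⥤ D} (adj : L ⊣ R) : Prop :=
  ∀ (W : D) (X : E), IsIso (frobMap adj W X)

/-- The left adjoint of the adjunction `L ⊣ R` sliced at `X`, sending `g : W ⟶ R X`
to its adjoint transpose `L W ⟶ X`. -/
def slicedL {L : D ⥤ E} {R : E ⥤ D} (adj : L ⊣ R) (X : E) : Over (R.obj X) ⥤ Over X where
  obj W := Over.mk (L.map W.hom ≫ adj.counit.app X)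
  map {W W'} u :=
    Over.homMk (L.map u.left) (by
      dsimp
      rw [← Category.assoc, ← L.map_comp, Over.w u])
  map_id W := by ext; dsimp; simp
  map_comp f g := by ext; dsimp; simp

/-- The right adjoint of the adjunction `L ⊣ R` sliced at `X`, sending `f : Y ⟶ X` to
`R f : R Y ⟶ R X`. -/
def slicedR {L : D ⥤ E} {R : E ⥤ D} (adj : L ⊣ R) (X : E) : Over X ⥤ Over (R.obj X) where
  obj Y := Over.mk (R.map Y.hom)
  map {Y Y'} u :=
    Over.homMk (R.map u.left) (by
      dsimp
      rw [← R.map_comp, Over.w u])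
  map_id Y := by ext; dsimp; simp
  map_comp f g := by ext; dsimp; simp

/-- The sliced adjunction `L_X ⊣ R_X : D / R X ⇄ E / X` of `L ⊣ R` at an object `X`. -/
def slicedAdj {L : D ⥤ E} {R : E ⥤ D} (adj : L ⊣ R) (X : E) : slicedL adj X ⊣ slicedR adj X :=
  Adjunction.mkOfHomEquiv
    { homEquiv := fun W Y =>
        { toFun := fun u => Over.homMk ((adj.homEquiv _ _) u.left) (by
            have hu := Over.w u
            dsimp [slicedL] at hu
            dsimp [slicedR]
            erw [Adjunction.homEquiv_unit, Category.assoc, ← R.map_comp, hu, R.map_comp,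
              adj.unit_naturality_assoc, adj.right_triangle_components, Category.comp_id])
          invFun := fun v => Over.homMk ((adj.homEquiv _ _).symm v.left) (by
            have hv := Over.w v
            dsimp [slicedR] at hv
            dsimp [slicedL]
            erw [Adjunction.homEquiv_counit, Category.assoc, ← adj.counit_naturality,
              ← Category.assoc, ← L.map_comp, hv])
          left_inv := fun u => by ext; exact Equiv.symm_apply_apply _ _
          right_inv := fun v => by ext; exact Equiv.apply_symm_apply _ _ }
      homEquiv_naturality_left_symm := by
        intro W' W Y f g
        ext
        dsimp [slicedL]
        exact adj.homEquiv_naturality_left_symm _ _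
      homEquiv_naturality_right := by
        intro W Y Y' f g
        ext
        dsimp [slicedR]
        exact adj.homEquiv_naturality_right _ _ }

/-- An adjunction between cartesian categories is stably Frobenius if every sliced
adjunction satisfies Frobenius reciprocity. -/
def IsStablyFrobenius {L : D ⥤ E} {R : E ⥤ D} (adj : L ⊣ R) : Prop :=
  ∀ X : E, IsFrobenius (slicedAdj adj X)

end Frobenius

/-- A morphism `f : X ⟶ Y` is an effective descent morphism if the pullback functor
`f* : C/Y ⥤ C/X` is monadic. -/
def EffectiveDescentMorphism {X Y : C} (f : X ⟶ Y) : Prop :=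
  Nonempty (MonadicRightAdjoint (Over.pullback f))

/-- A principal `G`-bundle: a `G`-object `(P, p)` such that `! : P ⟶ 1` is an effective
descent morphism and `(p, π₂) : G ⨯ P ⟶ P ⨯ P` is an isomorphism. -/
def IsPrincipal (Gr : InternalGroup C) (P : InternalGroup.GObject Gr) : Prop :=
  EffectiveDescentMorphism (terminal.from P.A) ∧
    IsIso (prod.lift (InternalGroup.act P) prod.snd)

/-- The functor `C ⥤ C/P` sending `X` to the projection `P ⨯ X ⟶ P`. -/
def projFunctor (P : C) : C ⥤ Over P where
  obj X := Over.mk (prod.fst : P ⨯ X ⟶ P)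
  map {X Y} f := Over.homMk (prod.map (𝟙 P) f) (by simp)
  map_id X := by ext; dsimp; simp
  map_comp f g := by ext; dsimp; simp

theorem cofork_condition (Gr : InternalGroup C) (P : InternalGroup.GObject Gr) (X : C) :
    ((prod.associator Gr.G P.A X).inv ≫ prod.map (InternalGroup.act P) (𝟙 X)) ≫
        (prod.snd : P.A ⨯ X ⟶ X)
      = (prod.snd : Gr.G ⨯ (P.A ⨯ X) ⟶ P.A ⨯ X) ≫ prod.snd := by
  simp

/-- The object `G ⨯ X` of `C/X` underlying the internal group induced by `G` in `C/X`. -/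
def overG (Gr : InternalGroup C) (X : C) : Over X := Over.mk (prod.snd : Gr.G ⨯ X ⟶ X)

section OverGroup

variable {Gr : InternalGroup C} {X : C}

/-- The `G`-component of a morphism into `G ⨯ X` over `X`. -/
abbrev toG {A : Over X} (u : A ⟶ overG Gr X) : A.left ⟶ Gr.G := u.left ≫ prod.fst

theorem homGX_ext {A : Over X} {u v : A ⟶ overG Gr X} (h : toG u = toG v) : u = v := by
  ext
  apply Limits.prod.hom_ext
  · exact h
  · have hu := Over.w u
    have hv := Over.w v
    dsimp [overG] at hu hv
    rw [hu, hv]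

theorem toG_comp {A B : Over X} (w : A ⟶ B) (u : B ⟶ overG Gr X) :
    toG (w ≫ u) = w.left ≫ toG u := by
  dsimp [toG]
  exact Category.assoc _ _ _

variable (Gr X)

/-- The multiplication `m ⨯ id_X : (G ⨯ G) ⨯ X ⟶ G ⨯ X` of the induced group in `C/X`,
viewing `(G ⨯ X) ⨯_X (G ⨯ X) ≅ (G ⨯ G) ⨯ X`. -/
def overMul : overG Gr X ⨯ overG Gr X ⟶ overG Gr X :=
  Over.homMk
    (prod.lift
      (prod.lift (toG (prod.fst : overG Gr X ⨯ overG Gr X ⟶ overG Gr X))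
        (toG (prod.snd : overG Gr X ⨯ overG Gr X ⟶ overG Gr X)) ≫ Gr.m)
      (overG Gr X ⨯ overG Gr X).hom)
    (by simp [overG])

/-- The unit `(e ∘ !, id_X) : X ⟶ G ⨯ X` of the induced group in `C/X`. -/
def overOne : ⊤_ (Over X) ⟶ overG Gr X :=
  Over.homMk (prod.lift (terminal.from (⊤_ Over X).left ≫ Gr.e) (⊤_ Over X).hom)
    (by simp [overG])

/-- The inverse `i ⨯ id_X : G ⨯ X ⟶ G ⨯ X` of the induced group in `C/X`. -/
def overInv : overG Gr X ⟶ overG Gr X :=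
  Over.homMk (prod.map Gr.i (𝟙 X)) (by simp [overG])

variable {Gr X}

theorem toG_overMul {A : Over X} (u : A ⟶ overG Gr X ⨯ overG Gr X) :
    toG (u ≫ overMul Gr X)
      = prod.lift (toG (u ≫ prod.fst)) (toG (u ≫ prod.snd)) ≫ Gr.m := by
  rw [toG_comp]
  dsimp [overMul, toG]
  erw [prod.lift_fst, prod.comp_lift_assoc]
  congr 2 <;> exact (Category.assoc _ _ _).symm

theorem toG_overOne {A : Over X} (u : A ⟶ ⊤_ (Over X)) :
    toG (u ≫ overOne Gr X) = terminal.from A.left ≫ Gr.e := by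
  rw [toG_comp]
  dsimp [overOne, toG]
  erw [prod.lift_fst, ← Category.assoc, terminal.comp_from]

end OverGroup

/-- The internal group `G ⨯ X` in the slice category `C/X` induced by an internal group `G`
of `C`: its multiplication is induced by `m ⨯ id_X`, its unit by `(e ∘ !, id_X)` and its
inverse by `i ⨯ id_X`. -/
def inducedGroup (Gr : InternalGroup C) (X : C) : InternalGroup (Over X) where
  G := overG Gr X
  m := overMul Gr X
  e := overOne Gr X
  i := overInv Gr X
  one_mul' := by
    apply homGX_ext
    rw [toG_overMul, prod.lift_fst, prod.lift_snd, toG_overOne]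
    simp only [toG, Over.id_left, Category.id_comp]
    exact Gr.one_mul_elt _
  mul_one' := by
    apply homGX_ext
    rw [toG_overMul, prod.lift_fst, prod.lift_snd, toG_overOne]
    simp only [toG, Over.id_left, Category.id_comp]
    exact Gr.mul_one_elt _
  mul_assoc' := by
    apply homGX_ext
    have l1 : ((prod.associator (overG Gr X) (overG Gr X) (overG Gr X)).inv ≫
          prod.map (overMul Gr X) (𝟙 (overG Gr X))) ≫ prod.fst
        = prod.lift prod.fst (prod.snd ≫ prod.fst) ≫ overMul Gr X := by
      rw [Category.assoc, prod.map_fst, ← Category.assoc]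
      congr 1
      simp
    have l2 : ((prod.associator (overG Gr X) (overG Gr X) (overG Gr X)).inv ≫
          prod.map (overMul Gr X) (𝟙 (overG Gr X))) ≫ prod.snd
        = prod.snd ≫ prod.snd := by
      rw [Category.assoc, prod.map_snd, Category.comp_id]
      simp
    have l3 : prod.map (𝟙 (overG Gr X)) (overMul Gr X) ≫
          (prod.fst : overG Gr X ⨯ overG Gr X ⟶ overG Gr X) = prod.fst := by
      rw [prod.map_fst, Category.comp_id]
    have l4 : prod.map (𝟙 (overG Gr X)) (overMul Gr X) ≫
          (prod.snd : overG Gr X ⨯ overG Gr X ⟶ overG Gr X)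
        = prod.snd ≫ overMul Gr X := by
      rw [prod.map_snd]
    rw [← Category.assoc, toG_overMul, l1, l2, toG_overMul, prod.lift_fst, prod.lift_snd]
    rw [toG_overMul, l3, l4, toG_overMul]
    exact Gr.mul_assoc_elt _ _ _
  inv_mul' := by
    apply homGX_ext
    rw [toG_overMul, prod.lift_fst, prod.lift_snd, toG_overOne]
    have hi : toG (overInv Gr X) = prod.fst ≫ Gr.i := by
      dsimp [overInv, toG]
      erw [prod.map_fst]
    rw [hi]
    simp only [toG, Over.id_left, Category.id_comp]
    erw [Category.id_comp]
    exact Gr.inv_mul_elt _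
  mul_inv' := by
    apply homGX_ext
    rw [toG_overMul, prod.lift_fst, prod.lift_snd, toG_overOne]
    have hi : toG (overInv Gr X) = prod.fst ≫ Gr.i := by
      dsimp [overInv, toG]
      erw [prod.map_fst]
    rw [hi]
    simp only [toG, Over.id_left, Category.id_comp]
    erw [Category.id_comp]
    exact Gr.mul_inv_elt _

/-- A principal `G`-bundle over an object `X` of `C`: a `G`-object `(P, p)` with an
action-invariant morphism `f : P ⟶ X` which is an effective descent morphism and such that
`(p, π₂) : G ⨯ P ⟶ P ⨯_X P` is an isomorphism. -/
structure PrincipalBundleOver (Gr : InternalGroup C) (X : C) where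
  P : InternalGroup.GObject Gr
  f : P.A ⟶ X
  invariant : InternalGroup.act P ≫ f = prod.snd ≫ f
  descent : EffectiveDescentMorphism f
  torsor : IsIso (pullback.lift (InternalGroup.act P) prod.snd invariant)

namespace PrincipalBundleOver

variable {Gr : InternalGroup C} {X : C}

/-- A morphism of principal `G`-bundles over `X`: a `G`-homomorphism over `X`. -/
@[ext]
structure Hom (P Q : PrincipalBundleOver Gr X) where
  hom : P.P ⟶ Q.P
  w : hom.f ≫ Q.f = P.f

/-- The category of principal `G`-bundles over `X`. -/
instance : Category (PrincipalBundleOver Gr X) where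
  Hom P Q := Hom P Q
  id P := ⟨𝟙 P.P, by rw [Monad.Algebra.id_f]; simp⟩
  comp u v := ⟨u.hom ≫ v.hom, by rw [Monad.Algebra.comp_f, Category.assoc, v.w, u.w]⟩
  id_comp u := by apply Hom.ext; simp
  comp_id u := by apply Hom.ext; simp
  assoc u v w := by apply Hom.ext; simp

end PrincipalBundleOver

/-- The category of adjunctions `L ⊣ R : C ⇄ [G, C]` over `C` (i.e. `Σ_G ∘ L ≅ Id_C`)
satisfying Frobenius reciprocity; morphisms are natural transformations between the left
adjoints. -/
structure FrobAdjObj (Gr : InternalGroup C) (SG : InternalGroup.GObject Gr ⥤ C) where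
  L : C ⥤ InternalGroup.GObject Gr
  R : InternalGroup.GObject Gr ⥤ C
  adj : L ⊣ R
  isOver : Nonempty (L ⋙ SG ≅ 𝟭 C)
  frob : IsFrobenius adj

/-- A morphism of adjunctions over `C`: a natural transformation between the left adjoints. -/
@[ext]
structure FrobAdjHom {Gr : InternalGroup C} {SG : InternalGroup.GObject Gr ⥤ C}
    (A B : FrobAdjObj Gr SG) where
  nat : A.L ⟶ B.L

instance (Gr : InternalGroup C) (SG : InternalGroup.GObject Gr ⥤ C) :
    Category (FrobAdjObj Gr SG) where
  Hom A B := FrobAdjHom A B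
  id A := ⟨𝟙 A.L⟩
  comp u v := ⟨u.nat ≫ v.nat⟩
  id_comp u := by apply FrobAdjHom.ext; simp
  comp_id u := by apply FrobAdjHom.ext; simp
  assoc u v w := by apply FrobAdjHom.ext; simp

/-- The category of adjunctions `L ⊣ R : C/X ⇄ [G, C]` over `C` (i.e. `Σ_G ∘ L ≅ Σ_X`)
that are stably Frobenius; morphisms are natural transformations between the left adjoints. -/
structure StablyFrobAdjOver (Gr : InternalGroup C) (SG : InternalGroup.GObject Gr ⥤ C)
    (X : C) where
  L : Over X ⥤ InternalGroup.GObject Gr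
  R : InternalGroup.GObject Gr ⥤ Over X
  adj : L ⊣ R
  isOver : Nonempty (L ⋙ SG ≅ Over.forget X)
  frob : IsStablyFrobenius adj

/-- A morphism of adjunctions over `C`: a natural transformation between the left adjoints. -/
@[ext]
structure StablyFrobAdjHom {Gr : InternalGroup C} {SG : InternalGroup.GObject Gr ⥤ C} {X : C}
    (A B : StablyFrobAdjOver Gr SG X) where
  nat : A.L ⟶ B.L

instance (Gr : InternalGroup C) (SG : InternalGroup.GObject Gr ⥤ C) (X : C) :
    Category (StablyFrobAdjOver Gr SG X) where
  Hom A B := StablyFrobAdjHom A B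
  id A := ⟨𝟙 A.L⟩
  comp u v := ⟨u.nat ≫ v.nat⟩
  id_comp u := by apply StablyFrobAdjHom.ext; simp
  comp_id u := by apply StablyFrobAdjHom.ext; simp
  assoc u v w := by apply StablyFrobAdjHom.ext; simp

end PrincipalBundles

open PrincipalBundles PrincipalBundles.InternalGroup
open CategoryTheory CategoryTheory.Limits

/-!
Maps `Σ_G A ⟶ Y` are the `G`-maps `A ⟶ G* Y`, i.e. the maps `A ⟶ Y` coequalizing the action
and the projection `G ⨯ A ⇉ A`; so `Σ_G A` is that coequalizer. Take `A = P ⨯ G* X`, whose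
action is `p ⨯ id_X`. Frobenius reciprocity identifies `Σ_G (G* X ⨯ P)` with `X ⨯ Σ_G P`, and
`Σ_G P = Σ_G (L 1) = 1`, so the coequalizer is `X` with quotient map `π₂`. These coequalizers are
natural in `X`, so `f` is invertible as soon as `id_P ⨯ f` is.
-/

section Coequalizer

variable {D : Type u₂} [Category.{v₂} D]

theorem isIso_of_isColimit_cofork {A B A' B' : D} {f g : A ⟶ B} {f' g' : A' ⟶ B'}
    {c : Cofork f g} {c' : Cofork f' g'} (hc : IsColimit c) (hc' : IsColimit c')
    (e₀ : A ≅ A') (e₁ : B ≅ B') (comm₁ : e₀.hom ≫ f' = f ≫ e₁.hom)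
    (comm₂ : e₀.hom ≫ g' = g ≫ e₁.hom) {u : c.pt ⟶ c'.pt} (hu : c.π ≫ u = e₁.hom ≫ c'.π) :
    IsIso u := by
  let w := parallelPair.ext (F := parallelPair f g) (G := parallelPair f' g') e₀ e₁
    comm₁.symm comm₂.symm
  have : u = (IsColimit.coconePointsIsoOfNatIso hc hc' w).hom :=
    Cofork.IsColimit.hom_ext hc (by
      rw [hu]
      exact (IsColimit.comp_coconePointsIsoOfNatIso_hom hc hc' w WalkingParallelPair.one).symm)
  rw [this]
  infer_instance

end Coequalizer

namespace PrincipalBundles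

variable {C : Type u} [Category.{v} C] [HasFiniteLimits C] {Gr : InternalGroup C}

attribute [local simp] prod.lift_fst prod.lift_snd prod.lift_fst_assoc prod.lift_snd_assoc

namespace InternalGroup

theorem act_naturality {A B : GObject Gr} (u : A ⟶ B) :
    prod.map (𝟙 Gr.G) u.f ≫ act B = act A ≫ u.f :=
  u.h

def prodGLift {T A B : GObject Gr} (u : T ⟶ A) (v : T ⟶ B) : T ⟶ prodGObject Gr A B where
  f := prod.lift u.f v.f
  h := by
    -- restated over `G ⨯ -` rather than `actionMonad.obj`, so that `simp` can match products
    change (prod.map (𝟙 Gr.G) (prod.lift u.f v.f) ≫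
        prod.lift (prod.map (𝟙 Gr.G) prod.fst ≫ act A) (prod.map (𝟙 Gr.G) prod.snd ≫ act B)
        : Gr.G ⨯ T.A ⟶ A.A ⨯ B.A) = act T ≫ prod.lift u.f v.f
    apply Limits.prod.hom_ext <;> simp [prod.map_map_assoc, act_naturality]

def isLimitProdGObject (A B : GObject Gr) :
    IsLimit (BinaryFan.mk (prodGFst A B) (prodGSnd A B)) :=
  BinaryFan.IsLimit.mk _ prodGLift
    (fun u v => Monad.Algebra.Hom.ext (prod.lift_fst u.f v.f))
    (fun u v => Monad.Algebra.Hom.ext (prod.lift_snd u.f v.f))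
    (fun {T} u v m hu hv => by
      ext
      change (m.f : T.A ⟶ A.A ⨯ B.A) = prod.lift u.f v.f
      apply Limits.prod.hom_ext
      · rw [prod.lift_fst]; exact congrArg Monad.Algebra.Hom.f hu
      · rw [prod.lift_snd]; exact congrArg Monad.Algebra.Hom.f hv)

theorem act_prodGObject_trivAction (P : GObject Gr) (X : C) :
    act (prodGObject Gr P ((trivAction Gr).obj X))
      = (prod.associator Gr.G P.A X).inv ≫ prod.map (act P) (𝟙 X) := by
  change (prod.lift (prod.map (𝟙 Gr.G) prod.fst ≫ act P)
      (prod.map (𝟙 Gr.G) prod.snd ≫ prod.snd) : Gr.G ⨯ (P.A ⨯ X) ⟶ P.A ⨯ X)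
    = (prod.associator Gr.G P.A X).inv ≫ prod.map (act P) (𝟙 X)
  apply Limits.prod.hom_ext
  · simp [← prod.lift_fst_comp_snd_comp]
  · simp

def toTrivAction (A : GObject Gr) {Y : C} (u : A.A ⟶ Y) (hu : act A ≫ u = prod.snd ≫ u) :
    A ⟶ (trivAction Gr).obj Y where
  f := u
  h := by
    change prod.map (𝟙 Gr.G) u ≫ prod.snd = act A ≫ u
    rw [prod.map_snd, hu]

end InternalGroup

section Quotient

variable {SG : GObject Gr ⥤ C} (adj : SG ⊣ trivAction Gr)

theorem act_comp_unit_f (A : GObject Gr) :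
    act A ≫ (adj.unit.app A).f = prod.snd ≫ (adj.unit.app A).f :=
  (act_naturality (adj.unit.app A)).symm.trans (prod.map_snd _ _)

theorem unit_f_comp_homEquiv_symm (A : GObject Gr) {Y : C} (u : A ⟶ (trivAction Gr).obj Y) :
    (adj.unit.app A).f ≫ (adj.homEquiv A Y).symm u = u.f := by
  have h := congrArg Monad.Algebra.Hom.f ((adj.homEquiv A Y).apply_symm_apply u)
  rwa [Adjunction.homEquiv_unit] at h

def isColimitUnitCofork (A : GObject Gr) :
    IsColimit (Cofork.ofπ (f := act A) (g := prod.snd) (adj.unit.app A).f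
      (act_comp_unit_f adj A)) :=
  Cofork.IsColimit.mk _
    (fun s => (adj.homEquiv A s.pt).symm (toTrivAction A s.π s.condition))
    (fun _ => unit_f_comp_homEquiv_symm adj A _)
    (fun s m hm => (Equiv.eq_symm_apply _).mpr (Monad.Algebra.Hom.ext
      ((congrArg Monad.Algebra.Hom.f (adj.homEquiv_unit A s.pt m)).trans hm)))

theorem isIso_homEquiv_symm_prodGSnd (hSG : IsFrobenius adj) {P : GObject Gr}
    (hP : IsTerminal (SG.obj P)) (X : C) :
    IsIso ((adj.homEquiv _ X).symm (prodGSnd P ((trivAction Gr).obj X))) := by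
  let ψ : prodGObject Gr P ((trivAction Gr).obj X) ≅ (trivAction Gr).obj X ⨯ P :=
    (isLimitProdGObject P _).binaryFanSwap.conePointUniqueUpToIso (limit.isLimit _)
  have hψ : ψ.hom ≫ prod.fst = prodGSnd P _ :=
    IsLimit.conePointUniqueUpToIso_hom_comp _ _ (Discrete.mk WalkingPair.left)
  have : IsIso (frobMap adj P X) := hSG P X
  have : IsIso (prod.fst : X ⨯ SG.obj P ⟶ X) :=
    (BinaryFan.isLimit_iff_isIso_fst hP (BinaryFan.mk prod.fst prod.snd)).mp
      ⟨prodIsProd _ _⟩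
  have hfactor : (adj.homEquiv _ X).symm (prodGSnd P _)
      = SG.map ψ.hom ≫ frobMap adj P X ≫ prod.fst := by
    rw [Adjunction.homEquiv_counit, frobMap, prod.lift_fst, ← Category.assoc, ← SG.map_comp, hψ]
  rw [hfactor]
  infer_instance

def isColimitProdSndCofork (hSG : IsFrobenius adj) {P : GObject Gr}
    (hP : IsTerminal (SG.obj P)) (X : C) :
    IsColimit (Cofork.ofπ (f := (prod.associator Gr.G P.A X).inv ≫ prod.map (act P) (𝟙 X))
      (g := (prod.snd : Gr.G ⨯ (P.A ⨯ X) ⟶ P.A ⨯ X)) (prod.snd : P.A ⨯ X ⟶ X)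
      (cofork_condition Gr P X)) := by
  have := isIso_homEquiv_symm_prodGSnd adj hSG hP X
  let e : SG.obj (prodGObject Gr P ((trivAction Gr).obj X)) ≅ X :=
    asIso ((adj.homEquiv _ X).symm (prodGSnd P _))
  exact Cofork.isColimitOfIsos _
    (isColimitUnitCofork adj (prodGObject Gr P ((trivAction Gr).obj X))) _
    (Iso.refl _) (Iso.refl _) e
    ((Category.id_comp _).trans
      ((act_prodGObject_trivAction P X).symm.trans (Category.comp_id _).symm))
    ((Category.id_comp _).trans (Category.comp_id _).symm)
    ((Category.id_comp _).trans (unit_f_comp_homEquiv_symm adj _ _))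

end Quotient

theorem reflectsIsomorphisms_projFunctor (P : GObject Gr)
    (hP : ∀ X : C, IsColimit (Cofork.ofπ
      (f := (prod.associator Gr.G P.A X).inv ≫ prod.map (act P) (𝟙 X))
      (g := (prod.snd : Gr.G ⨯ (P.A ⨯ X) ⟶ P.A ⨯ X)) (prod.snd : P.A ⨯ X ⟶ X)
      (cofork_condition Gr P X))) :
    (projFunctor P.A).ReflectsIsomorphisms where
  reflects {X Y} f _ := by
    have : IsIso (prod.map (𝟙 P.A) f) :=
      inferInstanceAs (IsIso ((Over.forget _).map ((projFunctor P.A).map f)))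
    refine isIso_of_isColimit_cofork (hP X) (hP Y)
      (asIso (prod.map (𝟙 Gr.G) (prod.map (𝟙 P.A) f))) (asIso (prod.map (𝟙 P.A) f))
      ?_ (prod.map_snd _ _) (prod.map_snd _ _).symm
    apply Limits.prod.hom_ext <;> simp [← prod.lift_fst_comp_snd_comp, prod.comp_lift_assoc]

end PrincipalBundles

theorem statement6_general {C : Type u} [Category.{v} C] [HasFiniteLimits C] (Gr : InternalGroup C)
    (SG : GObject Gr ⥤ C) (SGadj : SG ⊣ trivAction Gr) (hSG : IsFrobenius SGadj)
    (L : C ⥤ GObject Gr) (hover : L ⋙ SG = 𝟭 C) :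
    (∀ X : C, Nonempty (IsColimit (Cofork.ofπ
      (f := (prod.associator Gr.G (L.obj (⊤_ C)).A X).inv ≫
              prod.map (act (L.obj (⊤_ C))) (𝟙 X))
      (g := (prod.snd : Gr.G ⨯ ((L.obj (⊤_ C)).A ⨯ X) ⟶ (L.obj (⊤_ C)).A ⨯ X))
      (prod.snd : (L.obj (⊤_ C)).A ⨯ X ⟶ X)
      (cofork_condition Gr (L.obj (⊤_ C)) X)))) ∧
    (projFunctor (L.obj (⊤_ C)).A).ReflectsIsomorphisms := by
  have hP : IsTerminal (SG.obj (L.obj (⊤_ C))) :=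
    terminalIsTerminal.ofIso (eqToIso (Functor.congr_obj hover (⊤_ C))).symm
  exact ⟨fun X => ⟨isColimitProdSndCofork SGadj hSG hP X⟩,
    reflectsIsomorphisms_projFunctor _ (isColimitProdSndCofork SGadj hSG hP)⟩

/-- If `Σ_G ⊣ G*` satisfies Frobenius reciprocity and `L ⊣ R : C ⇄ [G, C]`
is an adjunction over `C` with `(P, p) = L 1`, then for every `X` the diagram
`G ⨯ P ⨯ X ⇉ P ⨯ X ⟶ X` (parallel pair `p ⨯ id_X` and `π₂₃`, with `π₂` as coequalizing map)
is a coequalizer in `C`; consequently `P* : C ⥤ C/P` reflects isomorphisms. -/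
theorem statement6 {C : Type u} [Category.{v} C] [HasFiniteLimits C] (Gr : InternalGroup C)
    (SG : GObject Gr ⥤ C) (SGadj : SG ⊣ trivAction Gr) (hSG : IsFrobenius SGadj)
    (L : C ⥤ GObject Gr) (R : GObject Gr ⥤ C) (adj : L ⊣ R) (hover : L ⋙ SG = 𝟭 C) :
    (∀ X : C, Nonempty (IsColimit (Cofork.ofπ
      (f := (prod.associator Gr.G (L.obj (⊤_ C)).A X).inv ≫
              prod.map (act (L.obj (⊤_ C))) (𝟙 X))
      (g := (prod.snd : Gr.G ⨯ ((L.obj (⊤_ C)).A ⨯ X) ⟶ (L.obj (⊤_ C)).A ⨯ X))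
      (prod.snd : (L.obj (⊤_ C)).A ⨯ X ⟶ X)
      (cofork_condition Gr (L.obj (⊤_ C)) X)))) ∧
    (projFunctor (L.obj (⊤_ C)).A).ReflectsIsomorphisms :=
  statement6_general Gr SG SGadj hSG L hover
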